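/- arXiv:1305.5788 — 4 statements merged into one kernel-verified Lean document; each statement's English description precedes it below -/
import Mathlib

section
/- Let σ_3 : ℝ/ℤ → ℝ/ℤ be x ↦ 3x. If A ⊆ ℝ/ℤ is contained in the complement of the union of two disjoint closed arcs each of length at least 1/3, then the restriction of σ_3 to A is injective. -/
/-!
If `3x = 3y` with `x ≠ y`, then `x`, `y` are two of the three points of the fibre
`{z | 3z = 3x}`, a coset of the `3`-torsion. Every closed arc of length at least `1/3` meets
every such fibre, so each of the two arcs must contain the third point of the fibre, and the
arcs are not disjoint.
-/

open Set

theorem Set.eq_of_encard_le_three {α : Type*} {s : Set α} (hs : s.encard ≤ 3) {x y z w : α}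
    (hx : x ∈ s) (hy : y ∈ s) (hz : z ∈ s) (hw : w ∈ s) (hxy : x ≠ y) (hzx : z ≠ x)
    (hzy : z ≠ y) (hwx : w ≠ x) (hwy : w ≠ y) : z = w := by
  by_contra hzw
  have hfour : ({w, z, y, x} : Set α).encard = 4 := by
    rw [encard_insert_of_notMem (by simp [hwx, hwy, Ne.symm hzw]),
      encard_insert_of_notMem (by simp [hzx, hzy]), encard_pair hxy.symm]
    norm_num
  have hle := encard_le_encard (by simp [insert_subset_iff, *] : ({w, z, y, x} : Set α) ⊆ s)
  rw [hfour] at hle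
  exact absurd (hle.trans hs) (by norm_num)

namespace AddCircle

variable {p : ℝ}

theorem encard_nsmul_fiber_le {n : ℕ} (hn : n ≠ 0) (x : AddCircle p) :
    {z : AddCircle p | n • z = n • x}.encard ≤ n := by
  have hfiber : {z : AddCircle p | n • z = n • x} = (x + ·) '' {u | n • u = 0} := by
    ext z
    constructor
    · intro hz
      exact ⟨z - x, by rw [mem_ofPred_eq, nsmul_sub, hz, sub_self], add_sub_cancel x z⟩
    · rintro ⟨u, hu, rfl⟩
      rw [mem_ofPred_eq, nsmul_add, hu, add_zero]
  rw [hfiber, (add_right_injective x).encard_image]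
  exact card_torsion_le_of_isSMulRegular p n hn
    (.of_right_eq_zero_of_smul fun _ ↦ by simp [hn])

theorem exists_mem_image_Icc_nsmul_eq (hp : 0 < p) {n : ℕ} (hn : 0 < n) {ℓ : ℝ}
    (hℓ : p / n ≤ ℓ) (t : ℝ) (x : AddCircle p) :
    ∃ z ∈ ((↑) : ℝ → AddCircle p) '' Icc t (t + ℓ), n • z = n • x := by
  obtain ⟨a, rfl⟩ := QuotientAddGroup.mk_surjective x
  have hn' : (0 : ℝ) < n := Nat.cast_pos.mpr hn
  -- `a + m p / n` is the first point of the fibre `a + (p / n) ℤ` at or after `t`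
  set m := ⌈(t - a) * n / p⌉
  have hm₁ : (t - a) * n ≤ m * p := (div_le_iff₀ hp).mp (Int.le_ceil _)
  have hm₂ : m * p < (t - a) * n + p := by
    have := Int.ceil_lt_add_one ((t - a) * n / p)
    rwa [div_add_one hp.ne', lt_div_iff₀ hp] at this
  have hstep : (m : ℝ) * (p / n) = m * p / n := mul_div_assoc _ _ _ |>.symm
  refine ⟨↑(a + m * (p / n)), ⟨a + m * (p / n), ⟨?_, ?_⟩, rfl⟩, ?_⟩
  · rw [hstep]
    linarith [(le_div_iff₀ hn').mpr hm₁]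
  · have : (m : ℝ) * p / n < (t - a) + p / n := by
      rw [div_lt_iff₀ hn', add_mul, div_mul_cancel₀ _ hn'.ne']; linarith
    linarith
  · have hperiod : (n : ℝ) * (m * (p / n)) = m • p := by rw [zsmul_eq_mul]; field_simp
    rw [coe_add, nsmul_add, ← coe_nsmul (x := m * (p / n)), nsmul_eq_mul, hperiod, coe_zsmul,
      coe_period, smul_zero, add_zero]

end AddCircle

/-- If `A ⊆ ℝ/ℤ` avoids two disjoint closed arcs each of length at least `1/3`,
then the tripling map `σ_3 : x ↦ 3x` is injective on `A`. -/
theorem sigma3_injOn_complement_of_two_arcs (t₁ ℓ₁ t₂ ℓ₂ : ℝ)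
    (h₁ : 1/3 ≤ ℓ₁) (h₂ : 1/3 ≤ ℓ₂)
    (hdisj : Disjoint ((fun r : ℝ => (r : AddCircle (1:ℝ))) '' Set.Icc t₁ (t₁ + ℓ₁))
      ((fun r : ℝ => (r : AddCircle (1:ℝ))) '' Set.Icc t₂ (t₂ + ℓ₂)))
    (A : Set (AddCircle (1:ℝ)))
    (hA : A ⊆ (((fun r : ℝ => (r : AddCircle (1:ℝ))) '' Set.Icc t₁ (t₁ + ℓ₁)) ∪
      ((fun r : ℝ => (r : AddCircle (1:ℝ))) '' Set.Icc t₂ (t₂ + ℓ₂)))ᶜ) :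
    Set.InjOn (fun x : AddCircle (1:ℝ) => 3 • x) A := by
  intro x hx y hy hxy
  by_contra hne
  have hout : ∀ a ∈ A, ∀ z, z ∈ _ ∪ _ → z ≠ a := fun a ha z hz h ↦ hA ha (h ▸ hz)
  obtain ⟨z₁, hz₁, hz₁x⟩ :=
    AddCircle.exists_mem_image_Icc_nsmul_eq one_pos three_pos (by exact_mod_cast h₁) t₁ x
  obtain ⟨z₂, hz₂, hz₂x⟩ :=
    AddCircle.exists_mem_image_Icc_nsmul_eq one_pos three_pos (by exact_mod_cast h₂) t₂ x
  have hz : z₁ = z₂ :=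
    Set.eq_of_encard_le_three (AddCircle.encard_nsmul_fiber_le three_ne_zero x)
      rfl hxy.symm hz₁x hz₂x hne (hout x hx z₁ (.inl hz₁)) (hout y hy z₁ (.inl hz₁))
      (hout x hx z₂ (.inr hz₂)) (hout y hy z₂ (.inr hz₂))
  exact Set.disjoint_left.mp hdisj hz₁ (hz ▸ hz₂)
end

section
/- Let σ_2 : ℝ/ℤ → ℝ/ℤ be x ↦ 2x, and let H be a closed half-circle (a closed arc of length 1/2). Then any two periodic orbits of σ_2 entirely contained in H coincide; i.e., H contains at most one periodic orbit of σ_2. -/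
/-!
Let `X` be the union of two periodic orbits lying in the arc `[t, t + 1/2]`, and measure points
by their lift to `[t, t + 1)`. Doubling maps `X` onto itself. If `a < b` are consecutive points
of `X` and `2a` is not the top point of `X`, then `2a < 2b` are again consecutive, at twice the
distance: a point of `X` between them would have a preimage in `X` between `a` and `b`, up to a
shift by a nonzero multiple of `1/2` that leaves the arc. Gaps inside the arc are at most `1/2`,
so the orbit of every point of `X` reaches the top point of `X`. Hence the two orbits meet, and
periodic orbits that meet coincide.
-/

open Set Function

local notation "σ₂" => fun z : AddCircle (1:ℝ) => 2 • z

namespace Function.IsPeriodicPt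

variable {α : Type*} {f : α → α} {n : ℕ} {x : α}

lemma finite_range_iterate (hx : IsPeriodicPt f n x) (hn : 0 < n) :
    (range fun k => f^[k] x).Finite :=
  ((finite_Iio n).image fun k => f^[k] x).subset <| by
    rintro _ ⟨k, rfl⟩
    exact ⟨k % n, Nat.mod_lt k hn, hx.iterate_mod_apply k⟩

lemma surjOn_range_iterate (hx : IsPeriodicPt f n x) (hn : 0 < n) :
    SurjOn f (range fun k => f^[k] x) (range fun k => f^[k] x) := by
  rintro _ ⟨k, rfl⟩
  refine ⟨f^[k + n - 1] x, ⟨_, rfl⟩, ?_⟩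
  rw [← iterate_succ_apply' f, Nat.succ_eq_add_one, Nat.sub_add_cancel (by omega),
    iterate_add_apply, hx.eq]

lemma range_iterate_iterate (hx : IsPeriodicPt f n x) (hn : 0 < n) (j : ℕ) :
    (range fun k => f^[k] (f^[j] x)) = range fun k => f^[k] x := by
  refine Subset.antisymm ?_ ?_
  · rintro _ ⟨k, rfl⟩
    exact ⟨k + j, iterate_add_apply f k j x⟩
  · rintro _ ⟨k, rfl⟩
    refine ⟨k + (n * j - j), ?_⟩
    dsimp only
    rw [← iterate_add_apply, add_assoc, Nat.sub_add_cancel (Nat.le_mul_of_pos_left j hn),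
      iterate_add_apply, (hx.mul_const j).eq]

end Function.IsPeriodicPt

lemma Set.mapsTo_range_iterate {α : Type*} (f : α → α) (x : α) :
    MapsTo f (range fun k => f^[k] x) (range fun k => f^[k] x) := by
  rintro _ ⟨k, rfl⟩
  exact ⟨k + 1, iterate_succ_apply' f k x⟩

noncomputable def icoRep (t : ℝ) (z : AddCircle (1:ℝ)) : ℝ := AddCircle.equivIco 1 t z

lemma icoRep_mem_Ico (t : ℝ) (z : AddCircle (1:ℝ)) : icoRep t z ∈ Ico t (t + 1) :=
  (AddCircle.equivIco 1 t z).2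

lemma coe_icoRep (t : ℝ) (z : AddCircle (1:ℝ)) : (icoRep t z : AddCircle (1:ℝ)) = z :=
  AddCircle.coe_equivIco

lemma icoRep_injective (t : ℝ) : Injective (icoRep t) :=
  Subtype.val_injective.comp (AddCircle.equivIco 1 t).injective

lemma icoRep_le_of_mem_image {t : ℝ} {z : AddCircle (1:ℝ)}
    (hz : z ∈ (fun r : ℝ => (r : AddCircle (1:ℝ))) '' Icc t (t + 1/2)) :
    icoRep t z ≤ t + 1/2 := by
  obtain ⟨r, hr, rfl⟩ := hz
  rw [icoRep, AddCircle.equivIco_coe_of_mem ⟨hr.1, by linarith [hr.2]⟩]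
  exact hr.2

lemma exists_icoRep_two_nsmul (t : ℝ) (z : AddCircle (1:ℝ)) :
    ∃ r : ℤ, icoRep t (2 • z) = 2 * icoRep t z + r := by
  have h : ((icoRep t (2 • z) - 2 * icoRep t z : ℝ) : AddCircle (1:ℝ)) = 0 := by
    rw [AddCircle.coe_sub, two_mul, AddCircle.coe_add, coe_icoRep, coe_icoRep, two_nsmul,
      sub_self]
  obtain ⟨r, hr⟩ := (AddCircle.coe_eq_zero_iff 1).1 h
  exact ⟨r, by rw [zsmul_one] at hr; linarith⟩

structure Consecutive (t : ℝ) (X : Set (AddCircle (1:ℝ))) (a b : AddCircle (1:ℝ)) : Prop where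
  left_mem : a ∈ X
  right_mem : b ∈ X
  lt : icoRep t a < icoRep t b
  not_mem_Ioo : ∀ c ∈ X, icoRep t c ∉ Ioo (icoRep t a) (icoRep t b)

section

variable {t : ℝ} {X : Set (AddCircle (1:ℝ))} {a b : AddCircle (1:ℝ)}

lemma exists_consecutive (hX : X.Finite) (ha : a ∈ X)
    (hup : ∃ c ∈ X, icoRep t a < icoRep t c) : ∃ b, Consecutive t X a b := by
  obtain ⟨b, ⟨hb, hab⟩, hmin⟩ := exists_min_image _ (icoRep t) (hX.sep _) hup
  exact ⟨b, ha, hb, hab, fun c hc h => (hmin c ⟨hc, h.1⟩).not_gt h.2⟩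

lemma Consecutive.icoRep_not_mem_Ioo_two_mul (hH : ∀ z ∈ X, icoRep t z ≤ t + 1/2)
    (hsurj : SurjOn σ₂ X X) (hab : Consecutive t X a b) {c : AddCircle (1:ℝ)} (hc : c ∈ X)
    (i : ℤ) : icoRep t c ∉ Ioo (2 * icoRep t a + i) (2 * icoRep t b + i) := by
  rintro ⟨h₁, h₂⟩
  obtain ⟨d, hd, rfl⟩ := hsurj hc
  obtain ⟨r, hr⟩ := exists_icoRep_two_nsmul t d
  rw [hr] at h₁ h₂
  have hd₀ := (icoRep_mem_Ico t d).1
  have ha₀ := (icoRep_mem_Ico t a).1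
  have hd₁ := hH d hd
  have hb₁ := hH b hab.right_mem
  rcases lt_trichotomy r i with hri | rfl | hir
  · have : (r : ℝ) + 1 ≤ i := by exact_mod_cast hri
    linarith
  · exact hab.not_mem_Ioo d hd ⟨by linarith, by linarith⟩
  · have : (i : ℝ) + 1 ≤ r := by exact_mod_cast hir
    linarith

lemma Consecutive.two_nsmul (hH : ∀ z ∈ X, icoRep t z ≤ t + 1/2) (hmaps : MapsTo σ₂ X X)
    (hsurj : SurjOn σ₂ X X) (hab : Consecutive t X a b)
    (hup : ∃ c ∈ X, icoRep t (2 • a) < icoRep t c) :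
    Consecutive t X (2 • a) (2 • b) ∧
      icoRep t (2 • b) - icoRep t (2 • a) = 2 * (icoRep t b - icoRep t a) := by
  obtain ⟨c, hc, hac⟩ := hup
  obtain ⟨p, hp⟩ := exists_icoRep_two_nsmul t a
  obtain ⟨q, hq⟩ := exists_icoRep_two_nsmul t b
  have hc₁ := hH c hc
  have ha₀ := (icoRep_mem_Ico t (2 • a)).1
  have hb₀ := (icoRep_mem_Ico t (2 • b)).1
  have hb₁ := hH _ (hmaps hab.right_mem)
  have hab' := hab.lt
  -- The point `c` above `2a` pins the lift of `2b` to `2b + p`, not `2b + p - 1`.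
  have h2b : 2 * icoRep t b + p ≤ icoRep t c := by
    by_contra! h
    exact hab.icoRep_not_mem_Ioo_two_mul hH hsurj hc p ⟨hp ▸ hac, h⟩
  have hqp : q = p := by
    have h₁ : (q : ℝ) - p < 1 := by linarith
    have h₂ : -1 < (q : ℝ) - p := by linarith
    have h₁' : q - p < 1 := by exact_mod_cast h₁
    have h₂' : -1 < q - p := by exact_mod_cast h₂
    omega
  subst hqp
  refine ⟨⟨hmaps hab.left_mem, hmaps hab.right_mem, by linarith, fun d hd => ?_⟩,
    by linarith⟩
  rw [hp, hq]
  exact hab.icoRep_not_mem_Ioo_two_mul hH hsurj hd q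

lemma Consecutive.iterate (hH : ∀ z ∈ X, icoRep t z ≤ t + 1/2) (hmaps : MapsTo σ₂ X X)
    (hsurj : SurjOn σ₂ X X) (hab : Consecutive t X a b)
    (hup : ∀ s, ∃ c ∈ X, icoRep t (σ₂^[s] a) < icoRep t c) (s : ℕ) :
    Consecutive t X (σ₂^[s] a) (σ₂^[s] b) ∧
      icoRep t (σ₂^[s] b) - icoRep t (σ₂^[s] a) = 2 ^ s * (icoRep t b - icoRep t a) := by
  induction s with
  | zero => exact ⟨hab, by simp⟩
  | succ s ih =>
    have hup' := hup (s + 1)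
    rw [iterate_succ_apply'] at hup' ⊢
    rw [iterate_succ_apply']
    obtain ⟨hcons, hgap⟩ := ih.1.two_nsmul hH hmaps hsurj hup'
    exact ⟨hcons, by rw [hgap, ih.2, pow_succ]; ring⟩

lemma exists_iterate_forall_icoRep_le (hH : ∀ z ∈ X, icoRep t z ≤ t + 1/2)
    (hmaps : MapsTo σ₂ X X) (hsurj : SurjOn σ₂ X X) (hX : X.Finite) (ha : a ∈ X) :
    ∃ s, ∀ c ∈ X, icoRep t c ≤ icoRep t (σ₂^[s] a) := by
  by_contra! hup
  obtain ⟨b, hab⟩ := exists_consecutive hX ha (hup 0)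
  obtain ⟨s, hs⟩ := pow_unbounded_of_one_lt (1 / (icoRep t b - icoRep t a)) one_lt_two
  obtain ⟨hcons, hgap⟩ := hab.iterate hH hmaps hsurj hup s
  have := (icoRep_mem_Ico t (σ₂^[s] a)).1
  have := hH _ hcons.right_mem
  rw [div_lt_iff₀ (sub_pos.2 hab.lt)] at hs
  linarith

end

/-- A closed half-circle contains at most one periodic orbit of the doubling map:
any two periodic orbits of `σ_2` entirely contained in a closed arc of length `1/2`
coincide. -/
theorem half_circle_unique_periodic_orbit (t : ℝ) (x y : AddCircle (1:ℝ))
    (n m : ℕ) (hn : 1 ≤ n) (hm : 1 ≤ m)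
    (hx : (fun z : AddCircle (1:ℝ) => 2 • z)^[n] x = x)
    (hy : (fun z : AddCircle (1:ℝ) => 2 • z)^[m] y = y)
    (hxH : ∀ k, (fun z : AddCircle (1:ℝ) => 2 • z)^[k] x ∈
      (fun r : ℝ => (r : AddCircle (1:ℝ))) '' Set.Icc t (t + 1/2))
    (hyH : ∀ k, (fun z : AddCircle (1:ℝ) => 2 • z)^[k] y ∈
      (fun r : ℝ => (r : AddCircle (1:ℝ))) '' Set.Icc t (t + 1/2)) :
    {z | ∃ k, (fun z : AddCircle (1:ℝ) => 2 • z)^[k] x = z} =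
      {z | ∃ k, (fun z : AddCircle (1:ℝ) => 2 • z)^[k] y = z} := by
  have hx' : IsPeriodicPt σ₂ n x := hx
  have hy' : IsPeriodicPt σ₂ m y := hy
  set X := (range fun k => σ₂^[k] x) ∪ range fun k => σ₂^[k] y
  have hX : X.Finite := (hx'.finite_range_iterate hn).union (hy'.finite_range_iterate hm)
  have hH : ∀ z ∈ X, icoRep t z ≤ t + 1/2 := by
    rintro _ (⟨k, rfl⟩ | ⟨k, rfl⟩)
    exacts [icoRep_le_of_mem_image (hxH k), icoRep_le_of_mem_image (hyH k)]
  have hmaps : MapsTo σ₂ X X := (mapsTo_range_iterate _ x).union_union (mapsTo_range_iterate _ y)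
  have hsurj : SurjOn σ₂ X X :=
    (hx'.surjOn_range_iterate hn).union_union (hy'.surjOn_range_iterate hm)
  obtain ⟨r, hr⟩ :=
    exists_iterate_forall_icoRep_le hH hmaps hsurj hX (mem_union_left _ ⟨0, rfl⟩)
  obtain ⟨s, hs⟩ :=
    exists_iterate_forall_icoRep_le hH hmaps hsurj hX (mem_union_right _ ⟨0, rfl⟩)
  have hmeet : σ₂^[r] x = σ₂^[s] y :=
    icoRep_injective t ((hs _ (Or.inl ⟨r, rfl⟩)).antisymm (hr _ (Or.inr ⟨s, rfl⟩)))
  change (range fun k => σ₂^[k] x) = range fun k => σ₂^[k] y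
  rw [← hx'.range_iterate_iterate hn r, hmeet, hy'.range_iterate_iterate hm s]
end

section
/- Let σ_2 : ℝ/ℤ → ℝ/ℤ be x ↦ 2x, and let P be a finite σ_2-periodic orbit contained in a closed half-circle. Then P is either the fixed point {0}, or the 2-cycle {1/3, 2/3}, or more generally σ_2 acts on P = {x_1 < x_2 < ⋯ < x_n} (cyclic order) as a combinatorial rotation: there exists p with σ_2(x_i) = x_{i+p (mod n)} for all i. -/
/-!
Doubling is injective on a periodic orbit, and two points at distance exactly `1/2` have the same
double, so the orbit lies in an arc of length `< 1/2`. Doubling stretches that arc to one of length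
`< 1` without folding it, so `σ_2` preserves the cyclic order of the orbit. A self-map of `Fin m`
that preserves cyclic order is a rotation: writing `x (π i) = 2 x i + K i` with `K i ∈ ℤ`, the
integers `π i - m K i` increase strictly in `i` and span less than `m`, hence equal `π 0 + i`.
-/

open Function Set

lemma AddCircle.exists_int_eq_add_of_coe_eq {p a b : ℝ} (h : (a : AddCircle p) = b) :
    ∃ k : ℤ, a = b + k * p := by
  obtain ⟨k, hk⟩ := (AddCircle.coe_eq_zero_iff p (x := a - b)).1 <| by
    rw [AddCircle.coe_sub, h, sub_self]
  exact ⟨k, by rw [zsmul_eq_mul] at hk; linarith⟩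

theorem Fin.apply_eq_apply_zero_add_val {n : ℕ} (F : Fin (n + 1) → ℤ)
    (hstep : ∀ i : Fin n, F i.castSucc < F i.succ) (hspan : F (last n) ≤ F 0 + n)
    (i : Fin (n + 1)) : F i = F 0 + i := by
  have hmono : Monotone fun j : Fin (n + 1) => F j - j := Fin.monotone_iff_le_succ.2 fun j => by
    have := hstep j
    simp only [val_castSucc, val_succ, Nat.cast_add, Nat.cast_one]
    omega
  have h0 := hmono (Fin.zero_le i)
  have hlast := hmono (Fin.le_last i)
  simp only [val_zero, val_last, Nat.cast_zero, sub_zero] at h0 hlast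
  omega

section Lift

variable {n : ℕ} {a b : Fin (n + 1) → ℝ} {π : Fin (n + 1) → Fin (n + 1)} {K : Fin (n + 1) → ℤ}

lemma eq_and_lt_or_eq_sub_one_and_gt_of_lift (ha : StrictMono a) (hb : StrictMono b)
    (ha1 : ∀ i j, a i - a j < 1) (hb1 : ∀ i j, b i - b j < 1) (hK : ∀ i, a (π i) = b i + K i)
    {i j : Fin (n + 1)} (hij : i < j) :
    (K j = K i ∧ π i < π j) ∨ (K j = K i - 1 ∧ π j < π i) := by
  have hb_ij := hb hij
  have hKij : ((K j - K i : ℤ) : ℝ) = (a (π j) - a (π i)) - (b j - b i) := by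
    push_cast; linarith [hK i, hK j]
  have hlow : ((-2 : ℤ) : ℝ) < ((K j - K i : ℤ) : ℝ) := by
    rw [hKij]; push_cast; linarith [ha1 (π i) (π j), hb1 j i]
  have hhigh : ((K j - K i : ℤ) : ℝ) < ((1 : ℤ) : ℝ) := by
    rw [hKij]; push_cast; linarith [ha1 (π j) (π i)]
  have hlow' : -2 < K j - K i := by exact_mod_cast hlow
  have hhigh' : K j - K i < 1 := by exact_mod_cast hhigh
  obtain h | h : K j = K i ∨ K j = K i - 1 := by omega
  · refine .inl ⟨h, ha.lt_iff_lt.1 ?_⟩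
    rw [h, sub_self, Int.cast_zero] at hKij
    linarith
  · refine .inr ⟨h, ha.lt_iff_lt.1 ?_⟩
    rw [h, sub_sub_cancel_left, Int.cast_neg, Int.cast_one] at hKij
    linarith [hb1 j i]

theorem exists_eq_add_of_lift (ha : StrictMono a) (hb : StrictMono b)
    (ha1 : ∀ i j, a i - a j < 1) (hb1 : ∀ i j, b i - b j < 1) (hK : ∀ i, a (π i) = b i + K i) :
    ∃ p, ∀ i, π i = i + p := by
  set F : Fin (n + 1) → ℤ := fun i => π i - (n + 1) * K i with hF
  have hgap {i j : Fin (n + 1)} (hij : i < j) : 1 ≤ F j - F i ∧ F j - F i ≤ n := by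
    have := (π i).is_lt
    have := (π j).is_lt
    rcases eq_and_lt_or_eq_sub_one_and_gt_of_lift ha hb ha1 hb1 hK hij with
      ⟨hKij, hπ⟩ | ⟨hKij, hπ⟩ <;>
    · rw [Fin.lt_def] at hπ
      simp only [hF, hKij]
      constructor <;> linarith
  have hspan : F (Fin.last n) ≤ F 0 + n := by
    rcases (Fin.zero_le (Fin.last n)).eq_or_lt with h | h
    · simp [← h]
    · linarith [hgap h]
  have hrot := Fin.apply_eq_apply_zero_add_val F
    (fun i => by linarith [hgap i.castSucc_lt_succ]) hspan
  refine ⟨π 0, fun i => Fin.ext ?_⟩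
  have hi : ((i : ℤ) + π 0) = π i + (n + 1) * (K 0 - K i) := by linarith [hrot i]
  zify
  rw [Fin.val_add, Int.natCast_mod, Nat.cast_add, hi, Nat.cast_succ, Int.add_mul_emod_self_left,
    Int.emod_eq_of_lt] <;> omega

end Lift

lemma sub_lt_half_of_injOn_two_nsmul {ι : Type*} {t : ℝ} {x : ι → ℝ}
    (hhalf : ∀ i, x i ∈ Icc t (t + 1 / 2))
    (hinj : InjOn (fun w : AddCircle (1 : ℝ) => 2 • w) (range fun i => (x i : AddCircle (1 : ℝ))))
    (i j : ι) : x i - x j < 1 / 2 := by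
  have hle : x i - x j ≤ 1 / 2 := by linarith [(hhalf i).2, (hhalf j).1]
  refine hle.lt_of_ne fun h => ?_
  have hdouble : ((2 • x i : ℝ) : AddCircle (1 : ℝ)) = ((2 • x j + 1 : ℝ) : AddCircle (1 : ℝ)) :=
    congrArg _ (by simp only [nsmul_eq_mul, Nat.cast_ofNat]; linarith)
  rw [AddCircle.coe_add_period, AddCircle.coe_nsmul, AddCircle.coe_nsmul] at hdouble
  have hx := (AddCircle.coe_eq_coe_iff_of_mem_Ico (p := 1) (a := t)
    ⟨(hhalf i).1, by linarith [(hhalf i).2]⟩ ⟨(hhalf j).1, by linarith [(hhalf j).2]⟩).1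
    (hinj (mem_range_self i) (mem_range_self j) hdouble)
  linarith

/-- Thurston: a periodic orbit of the doubling map contained in a closed half-circle
is acted on by `σ_2` as a combinatorial rotation: listing the orbit in circular
order as `x_1 < ⋯ < x_m`, there is `p` with `σ_2(x_i) = x_{i+p (mod m)}`. -/
theorem doubling_orbit_in_half_circle_is_rotation (m : ℕ) (hm : 0 < m)
    (t : ℝ) (x : Fin m → ℝ) (hmono : StrictMono x)
    (hhalf : ∀ i, x i ∈ Set.Icc t (t + 1/2))
    (horbit : ∃ z : AddCircle (1:ℝ), ∃ n : ℕ, 0 < n ∧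
      (fun w : AddCircle (1:ℝ) => 2 • w)^[n] z = z ∧
      Set.range (fun i : Fin m => ((x i : ℝ) : AddCircle (1:ℝ))) =
        {w | ∃ k : ℕ, (fun w : AddCircle (1:ℝ) => 2 • w)^[k] z = w}) :
    ∃ p : Fin m, ∀ i : Fin m,
      2 • ((x i : ℝ) : AddCircle (1:ℝ)) = ((x (i + p) : ℝ) : AddCircle (1:ℝ)) := by
  obtain ⟨n, rfl⟩ := Nat.exists_eq_add_one_of_ne_zero hm.ne'
  obtain ⟨z, N, hN, hz, hP⟩ := horbit
  have hperiodic : range (fun i => (x i : AddCircle (1 : ℝ))) ⊆ periodicPts (2 • ·) := by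
    rw [hP]
    rintro _ ⟨k, rfl⟩
    exact mk_mem_periodicPts hN (IsPeriodicPt.apply_iterate hz k)
  have hmaps (i : Fin (n + 1)) :
      2 • (x i : AddCircle (1 : ℝ)) ∈ range fun j => (x j : AddCircle (1 : ℝ)) := by
    obtain ⟨k, hk⟩ : (x i : AddCircle (1 : ℝ)) ∈ {w | ∃ k : ℕ, (2 • ·)^[k] z = w} :=
      hP ▸ mem_range_self i
    exact hP ▸ ⟨k + 1, by rw [iterate_succ_apply', hk]⟩
  choose π hπ using hmaps
  simp only at hπ
  have hinj : InjOn (2 • ·) (range fun i => (x i : AddCircle (1 : ℝ))) :=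
    (bijOn_periodicPts _).injOn.mono hperiodic
  have hspan := sub_lt_half_of_injOn_two_nsmul hhalf hinj
  have hK (i : Fin (n + 1)) : ∃ k : ℤ, x (π i) = 2 * x i + k := by
    simpa using AddCircle.exists_int_eq_add_of_coe_eq (p := 1)
      (by rw [hπ, ← AddCircle.coe_nsmul, nsmul_eq_mul, Nat.cast_ofNat])
  choose K hK using hK
  obtain ⟨p, hp⟩ := exists_eq_add_of_lift hmono (hmono.const_mul two_pos)
    (fun i j => by linarith [hspan i j]) (fun i j => by linarith [hspan i j]) hK
  exact ⟨p, fun i => by rw [← hp, hπ]⟩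
end

section
/- Let σ_3 : ℝ/ℤ → ℝ/ℤ be x ↦ 3x, let a ∈ ℝ/ℤ, and let Π be the set of all points whose entire forward σ_3-orbit is contained in the closed arc L complementary to the open arc (a, a+1/3). If the orbit of the point σ_3(a) is entirely contained in the open arc int(L) (the regular critical case), then Π has no isolated points; together with being closed, bounded, and (as shown separately) totally disconnected, Π is a Cantor set. -/
/-!
Work with representatives `t ∈ [a - 2/3, a]` of points of `Π`. A point isolated in `Π` bounds a
gap of `Π` on each side (or is an endpoint of `L`). Since `a - 1/3 ∈ Π`, a gap `(s, t)` has length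
at most `1/3`, so tripling either wraps it once around the circle, in which case it is exactly the
preimage of the hole and `3s, 3t` are `a, a + 1/3`, or maps it onto a gap three times as long.
Lengths cannot grow forever, so the endpoints of every gap eventually land on `a` and `a + 1/3`.
Hence the orbit of an isolated point passes through both endpoints of the hole, which the
regularity hypothesis forbids.
-/

open Set Filter Topology

def IsGap {α : Type*} [Preorder α] (S : Set α) (x y : α) : Prop :=
  x ∈ S ∧ y ∈ S ∧ x < y ∧ ∀ z ∈ Ioo x y, z ∉ S

section OrderGap

variable {α : Type*} [ConditionallyCompleteLinearOrder α] [TopologicalSpace α] [OrderTopology α]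
  {S : Set α} {x b : α}

theorem IsClosed.exists_isGap_right (hS : IsClosed S) (hx : x ∈ S) (hb : b ∈ S) (hxb : x < b)
    (h : ∀ᶠ y in 𝓝[>] x, y ∉ S) : ∃ m, IsGap S x m := by
  obtain ⟨u, hxu, hu⟩ := (mem_nhdsGT_iff_exists_Ioo_subset' hxb).1 h
  have hne : (S ∩ Ioi x).Nonempty := ⟨b, hb, hxb⟩
  have hbdd : BddBelow (S ∩ Ioi x) := ⟨x, fun y hy => le_of_lt hy.2⟩
  have hum : u ≤ sInf (S ∩ Ioi x) :=
    le_csInf hne fun y ⟨hyS, hxy⟩ => not_lt.1 fun hyu => hu ⟨hxy, hyu⟩ hyS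
  refine ⟨sInf (S ∩ Ioi x), hx, closure_minimal inter_subset_left hS (csInf_mem_closure hne hbdd),
    hxu.trans_le hum, fun y hy hyS => ?_⟩
  exact (csInf_le hbdd ⟨hyS, hy.1⟩).not_gt hy.2

theorem IsClosed.exists_isGap_left (hS : IsClosed S) (hx : x ∈ S) (hb : b ∈ S) (hbx : b < x)
    (h : ∀ᶠ y in 𝓝[<] x, y ∉ S) : ∃ m, IsGap S m x := by
  obtain ⟨m, -, hmS, hxm, hgap⟩ := IsClosed.exists_isGap_right (α := αᵒᵈ) hS hx hb hbx h
  exact ⟨m, hmS, hx, hxm, fun y hy => hgap y ⟨hy.2, hy.1⟩⟩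

end OrderGap

theorem AddCircle.accPt_coe_image {p : ℝ} [Fact (0 < p)] {s : Set ℝ} {x : ℝ}
    (h : AccPt x (𝓟 s)) : AccPt (x : AddCircle p) (𝓟 ((↑) '' s)) := by
  rw [accPt_iff_frequently] at h ⊢
  have hp : 0 < p := Fact.out
  have hx : x ∈ Ico (x - p / 2) (x - p / 2 + p) := by constructor <;> linarith
  refine (AddCircle.continuous_mk' p).continuousAt.frequently ?_
  refine (h.and_eventually (Ico_mem_nhds (by linarith : x - p / 2 < x) hx.2)).mono
    fun y ⟨⟨hyx, hys⟩, hy⟩ => ⟨fun hyx' => hyx ?_, y, hys, rfl⟩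
  exact (AddCircle.coe_eq_coe_iff_of_mem_Ico hy hx).1 hyx'

theorem AddCircle.coe_notMem_image_Ioo {p b c y : ℝ} [Fact (0 < p)] (hc : c ≤ b + p)
    (hy : y ∈ Ico b (b + p)) (hy' : y ∉ Ioo b c) : (y : AddCircle p) ∉ (↑) '' Ioo b c :=
  fun ⟨_, ht, hty⟩ => hy' <|
    (AddCircle.coe_eq_coe_iff_of_mem_Ico ⟨ht.1.le, ht.2.trans_le hc⟩ hy).1 hty ▸ ht

namespace Tripling

local notation "𝕋" => AddCircle (1 : ℝ)

lemma coe_sub_intCast (t : ℝ) (m : ℤ) : ((t - m : ℝ) : 𝕋) = t := by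
  rw [AddCircle.coe_sub, sub_eq_self, AddCircle.coe_eq_zero_iff]
  exact ⟨m, by simp⟩

lemma exists_eq_add_intCast_of_coe_eq {s t : ℝ} (h : (s : 𝕋) = t) : ∃ m : ℤ, s = t + m := by
  rw [← sub_eq_zero, ← AddCircle.coe_sub, AddCircle.coe_eq_zero_iff] at h
  obtain ⟨m, hm⟩ := h
  exact ⟨m, by simp at hm; linarith⟩

lemma three_nsmul_coe (t : ℝ) : 3 • (t : 𝕋) = ((3 * t : ℝ) : 𝕋) := by
  rw [← AddCircle.coe_nsmul, nsmul_eq_mul, Nat.cast_ofNat]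

lemma three_nsmul_coe_sub_two_thirds (a : ℝ) : 3 • ((a - 2 / 3 : ℝ) : 𝕋) = 3 • (a : 𝕋) := by
  rw [three_nsmul_coe, three_nsmul_coe, ← coe_sub_intCast (3 * a) 2]
  norm_num [mul_sub]

lemma three_nsmul_coe_sub_third (a : ℝ) : 3 • ((a - 1 / 3 : ℝ) : 𝕋) = 3 • (a : 𝕋) := by
  rw [three_nsmul_coe, three_nsmul_coe, ← coe_sub_intCast (3 * a) 1]
  norm_num [mul_sub]

variable (a : ℝ)

/-- The closed arc `L`, complementary to the hole `(a, a + 1/3)`. -/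
def arc : Set 𝕋 := (↑) '' Icc (a - 2 / 3) a

def openArc : Set 𝕋 := (↑) '' Ioo (a - 2 / 3) a

/-- The set `Π`, with `σ₃^[n] x` written as `3 ^ n • x`. -/
def survivors : Set 𝕋 := {x | ∀ n : ℕ, 3 ^ n • x ∈ arc a}

def IsRegularCritical : Prop := ∀ n : ℕ, 3 ^ (n + 1) • (a : 𝕋) ∈ openArc a

variable {a}

lemma coe_notMem_openArc : (a : 𝕋) ∉ openArc a :=
  AddCircle.coe_notMem_image_Ioo (by linarith) ⟨by linarith, by linarith⟩ (fun h => h.2.false)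

lemma coe_sub_two_thirds_notMem_openArc : ((a - 2 / 3 : ℝ) : 𝕋) ∉ openArc a :=
  AddCircle.coe_notMem_image_Ioo (by linarith) ⟨le_rfl, by linarith⟩ (fun h => h.1.false)

lemma coe_ne_coe_sub_two_thirds : (a : 𝕋) ≠ ((a - 2 / 3 : ℝ) : 𝕋) := fun h => by
  have := (AddCircle.coe_eq_coe_iff_of_mem_Ico (a := a - 2 / 3) (p := 1)
    ⟨by linarith, by linarith⟩ ⟨le_rfl, by linarith⟩).1 h
  linarith

lemma isClosed_arc : IsClosed (arc a) :=
  (isCompact_Icc.image (AddCircle.continuous_mk' 1)).isClosed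

lemma isClosed_survivors : IsClosed (survivors a) := by
  simp only [survivors, ofPred_forall]
  exact isClosed_iInter fun n => isClosed_arc.preimage (continuous_const_smul _)

lemma mem_survivors_iff {x : 𝕋} : x ∈ survivors a ↔ x ∈ arc a ∧ 3 • x ∈ survivors a := by
  simp only [survivors, mem_ofPred_eq, smul_smul, ← pow_succ]
  exact ⟨fun h => ⟨by simpa using h 0, fun n => h (n + 1)⟩,
    fun ⟨h0, h⟩ n => n.casesOn (by simpa using h0) h⟩

lemma coe_mem_survivors (h : IsRegularCritical a) : (a : 𝕋) ∈ survivors a := by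
  rintro (_ | n)
  · exact ⟨a, ⟨by linarith, le_rfl⟩, by simp⟩
  · exact image_mono Ioo_subset_Icc_self (h n)

lemma three_nsmul_mem_survivors {x : 𝕋} (hx : x ∈ survivors a) : 3 • x ∈ survivors a :=
  (mem_survivors_iff.1 hx).2

lemma coe_sub_two_thirds_mem_survivors (h : IsRegularCritical a) :
    ((a - 2 / 3 : ℝ) : 𝕋) ∈ survivors a := by
  refine mem_survivors_iff.2 ⟨⟨_, ⟨le_rfl, by linarith⟩, rfl⟩, ?_⟩
  rw [three_nsmul_coe_sub_two_thirds]
  exact three_nsmul_mem_survivors (coe_mem_survivors h)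

lemma coe_sub_third_mem_survivors (h : IsRegularCritical a) :
    ((a - 1 / 3 : ℝ) : 𝕋) ∈ survivors a := by
  refine mem_survivors_iff.2 ⟨⟨_, ⟨by linarith, by linarith⟩, rfl⟩, ?_⟩
  rw [three_nsmul_coe_sub_third]
  exact three_nsmul_mem_survivors (coe_mem_survivors h)

/-- After one step `a - 2/3` and `a` have the same orbit, which lies in the open arc, so no orbit
can pass through both endpoints of the hole. -/
lemma not_hits_both (h : IsRegularCritical a) {x : 𝕋} {i j : ℕ} (hi : 3 ^ i • x = a)
    (hj : 3 ^ j • x = ((a - 2 / 3 : ℝ) : 𝕋)) : False := by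
  rcases lt_trichotomy i j with hij | rfl | hji
  · obtain ⟨d, rfl⟩ := Nat.exists_eq_add_of_lt hij
    apply coe_sub_two_thirds_notMem_openArc (a := a)
    rw [← hj, add_assoc, add_comm, pow_add, mul_smul, hi]
    exact h d
  · exact coe_ne_coe_sub_two_thirds (hi.symm.trans hj)
  · obtain ⟨d, rfl⟩ := Nat.exists_eq_add_of_lt hji
    apply coe_notMem_openArc (a := a)
    rw [← hi, add_assoc, add_comm, pow_add, mul_smul, hj, pow_succ, mul_smul,
      three_nsmul_coe_sub_two_thirds, ← mul_smul, ← pow_succ]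
    exact h d

variable (a) in
def survivorReps : Set ℝ := Icc (a - 2 / 3) a ∩ (↑) ⁻¹' survivors a

lemma isClosed_survivorReps : IsClosed (survivorReps a) :=
  isClosed_Icc.inter (isClosed_survivors.preimage (AddCircle.continuous_mk' 1))

lemma exists_three_mul_sub_intCast_mem {t : ℝ} (ht : t ∈ survivorReps a) :
    ∃ m : ℤ, 3 * t - m ∈ survivorReps a := by
  have h3 := three_nsmul_mem_survivors ht.2
  obtain ⟨r, hr, hrt⟩ := (mem_survivors_iff.1 h3).1
  rw [three_nsmul_coe] at hrt
  obtain ⟨m, hm⟩ := exists_eq_add_intCast_of_coe_eq hrt.symm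
  refine ⟨m, ?_⟩
  rw [show 3 * t - m = r by linarith]
  exact ⟨hr, by rwa [mem_preimage, hrt, ← three_nsmul_coe]⟩

lemma mem_survivorReps_of_three_mul_sub_intCast {t : ℝ} (ht : t ∈ Icc (a - 2 / 3) a) (m : ℤ)
    (h : 3 * t - m ∈ survivorReps a) : t ∈ survivorReps a := by
  refine ⟨ht, mem_survivors_iff.2 ⟨⟨t, ht, rfl⟩, ?_⟩⟩
  rw [three_nsmul_coe, ← coe_sub_intCast _ m]
  exact h.2

lemma right_mem_survivorReps (h : IsRegularCritical a) : a ∈ survivorReps a :=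
  ⟨⟨by linarith, le_rfl⟩, coe_mem_survivors h⟩

lemma left_mem_survivorReps (h : IsRegularCritical a) : a - 2 / 3 ∈ survivorReps a :=
  ⟨⟨le_rfl, by linarith⟩, coe_sub_two_thirds_mem_survivors h⟩

variable {s t : ℝ}

lemma sub_le_third_of_isGap (h : IsRegularCritical a) (hg : IsGap (survivorReps a) s t) :
    t - s ≤ 1 / 3 := by
  obtain ⟨hs, ht, -, hgap⟩ := hg
  by_contra! hlt
  exact hgap (a - 1 / 3) ⟨by linarith [ht.1.2], by linarith [hs.1.1]⟩
    ⟨⟨by linarith, by linarith⟩, coe_sub_third_mem_survivors h⟩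

lemma hole_endpoints_or_isGap_of_isGap (h : IsRegularCritical a)
    (hg : IsGap (survivorReps a) s t) :
    (3 • (s : 𝕋) = a ∧ 3 • (t : 𝕋) = ((a - 2 / 3 : ℝ) : 𝕋)) ∨
      ∃ s' t', IsGap (survivorReps a) s' t' ∧ t' - s' = 3 * (t - s) ∧
        3 • (s : 𝕋) = s' ∧ 3 • (t : 𝕋) = t' := by
  have hlen := sub_le_third_of_isGap h hg
  obtain ⟨hs, ht, hst, hgap⟩ := hg
  obtain ⟨m, hm⟩ := exists_three_mul_sub_intCast_mem hs
  obtain ⟨n, hn⟩ := exists_three_mul_sub_intCast_mem ht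
  have hs3 : 3 • (s : 𝕋) = ((3 * s - m : ℝ) : 𝕋) := by rw [three_nsmul_coe, coe_sub_intCast]
  have ht3 : 3 • (t : 𝕋) = ((3 * t - n : ℝ) : 𝕋) := by rw [three_nsmul_coe, coe_sub_intCast]
  have hnm : n = m ∨ n = m + 1 := by
    have h1 : (m : ℝ) - 1 < n := by linarith [hm.1.1, hn.1.2]
    have h2 : (n : ℝ) < m + 2 := by linarith [hm.1.2, hn.1.1]
    have h1' : m - 1 < n := by exact_mod_cast h1
    have h2' : n < m + 2 := by exact_mod_cast h2
    omega
  rcases hnm with rfl | rfl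
  · refine Or.inr ⟨3 * s - n, 3 * t - n, ⟨hm, hn, by linarith, fun z hz hzS => ?_⟩, by ring,
      hs3, ht3⟩
    refine hgap ((z + n) / 3) ⟨by linarith [hz.1], by linarith [hz.2]⟩ ?_
    refine mem_survivorReps_of_three_mul_sub_intCast
      ⟨by linarith [hs.1.1, hz.1], by linarith [ht.1.2, hz.2]⟩ n ?_
    rwa [show 3 * ((z + n) / 3) - n = z by ring]
  · -- `3 • [s, t]` wraps once around the circle, so it covers the closed hole `[a, a + 1/3]`
    push_cast at hn ht3
    set p := (a + m) / 3 with hp_def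
    set q := (a + 1 / 3 + m) / 3 with hq_def
    have hsp : s ≤ p := by linarith [hm.1.2]
    have hqt : q ≤ t := by linarith [hn.1.1]
    have hpq : p < q := by linarith
    have hpI : p ∈ Icc (a - 2 / 3) a := ⟨by linarith [hs.1.1], by linarith [ht.1.2]⟩
    have hqI : q ∈ Icc (a - 2 / 3) a := ⟨by linarith [hs.1.1], by linarith [ht.1.2]⟩
    have hp : p ∈ survivorReps a := mem_survivorReps_of_three_mul_sub_intCast hpI m <| by
      rw [show 3 * p - m = a by ring]; exact right_mem_survivorReps h
    have hq : q ∈ survivorReps a := mem_survivorReps_of_three_mul_sub_intCast hqI (m + 1) <| by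
      rw [show 3 * q - ((m + 1 : ℤ) : ℝ) = a - 2 / 3 by push_cast; ring]
      exact left_mem_survivorReps h
    have hsp' : s = p := hsp.antisymm (not_lt.1 fun hlt => hgap p ⟨hlt, hpq.trans_le hqt⟩ hp)
    have hqt' : t = q :=
      (hqt.antisymm (not_lt.1 fun hlt => hgap q ⟨hsp.trans_lt hpq, hlt⟩ hq)).symm
    refine Or.inl ⟨?_, ?_⟩
    · rw [hs3, hsp']; congr 1; ring
    · rw [ht3, hqt']; congr 1; ring

lemma exists_hits_of_isGap (h : IsRegularCritical a) (hg : IsGap (survivorReps a) s t) :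
    ∃ k : ℕ, 3 ^ k • (s : 𝕋) = a ∧ 3 ^ k • (t : 𝕋) = ((a - 2 / 3 : ℝ) : 𝕋) := by
  obtain ⟨N, hN⟩ := pow_unbounded_of_one_lt (1 / (t - s)) (by norm_num : (1 : ℝ) < 3)
  rw [div_lt_iff₀ (sub_pos.2 hg.2.2.1)] at hN
  induction N generalizing s t with
  | zero => linarith [hg.1.1.1, hg.2.1.1.2]
  | succ N ih =>
    rcases hole_endpoints_or_isGap_of_isGap h hg with hk | ⟨s', t', hg', hlen, hs', ht'⟩
    · exact ⟨1, by simpa using hk⟩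
    · obtain ⟨k, hks, hkt⟩ := ih hg' (by rw [hlen, ← mul_assoc, ← pow_succ]; exact hN)
      refine ⟨k + 1, ?_, ?_⟩
      · rwa [pow_succ, mul_smul, hs']
      · rwa [pow_succ, mul_smul, ht']

lemma exists_nsmul_eq_of_eventually_notMem_nhdsGT (h : IsRegularCritical a)
    (ht : t ∈ survivorReps a) (hiso : ∀ᶠ y in 𝓝[>] t, y ∉ survivorReps a) :
    ∃ i : ℕ, 3 ^ i • (t : 𝕋) = a := by
  rcases ht.1.2.eq_or_lt with rfl | hta
  · exact ⟨0, one_smul _ _⟩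
  obtain ⟨m, hg⟩ :=
    isClosed_survivorReps.exists_isGap_right ht (right_mem_survivorReps h) hta hiso
  obtain ⟨k, hk, -⟩ := exists_hits_of_isGap h hg
  exact ⟨k, hk⟩

lemma exists_nsmul_eq_of_eventually_notMem_nhdsLT (h : IsRegularCritical a)
    (ht : t ∈ survivorReps a) (hiso : ∀ᶠ y in 𝓝[<] t, y ∉ survivorReps a) :
    ∃ j : ℕ, 3 ^ j • (t : 𝕋) = ((a - 2 / 3 : ℝ) : 𝕋) := by
  rcases ht.1.1.eq_or_lt with rfl | hta
  · exact ⟨0, one_smul _ _⟩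
  obtain ⟨m, hg⟩ :=
    isClosed_survivorReps.exists_isGap_left ht (left_mem_survivorReps h) hta hiso
  obtain ⟨k, -, hk⟩ := exists_hits_of_isGap h hg
  exact ⟨k, hk⟩

lemma accPt_survivorReps (h : IsRegularCritical a) (ht : t ∈ survivorReps a) :
    AccPt t (𝓟 (survivorReps a)) := by
  rw [accPt_iff_frequently_nhdsNE, ← nhdsLT_sup_nhdsGT, frequently_sup]
  by_contra! hiso
  obtain ⟨i, hi⟩ := exists_nsmul_eq_of_eventually_notMem_nhdsGT h ht hiso.2
  obtain ⟨j, hj⟩ := exists_nsmul_eq_of_eventually_notMem_nhdsLT h ht hiso.1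
  exact not_hits_both h hi hj

theorem perfect_survivors (h : IsRegularCritical a) : Perfect (survivors a) := by
  refine ⟨isClosed_survivors, fun x hx => ?_⟩
  obtain ⟨t, ht, rfl⟩ := (mem_survivors_iff.1 hx).1
  refine (AddCircle.accPt_coe_image (accPt_survivorReps h ⟨ht, hx⟩)).mono ?_
  exact principal_mono.2 (image_subset_iff.2 fun _ hs => hs.2)

end Tripling

/-- Regular critical case: if the entire forward orbit of `σ_3(a)` stays in the
interior of the closed arc `L` complementary to the hole `(a, a+1/3)`, then the set
`Π` of points whose full forward orbit lies in `L` is perfect (closed with no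
isolated points). -/
theorem regular_critical_pi_perfect (a : ℝ)
    (horb : ∀ n : ℕ, (3:ℕ)^(n+1) • ((a : ℝ) : AddCircle (1:ℝ)) ∈
      (fun r : ℝ => (r : AddCircle (1:ℝ))) '' Set.Ioo (a - 2/3) a) :
    Perfect {x : AddCircle (1:ℝ) | ∀ n : ℕ,
      (fun z : AddCircle (1:ℝ) => 3 • z)^[n] x ∈
        (fun r : ℝ => (r : AddCircle (1:ℝ))) '' Set.Icc (a - 2/3) a} := by
  simp only [smul_iterate]
  exact Tripling.perfect_survivors horb
end
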